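/- Let a = x_0 < x_1 < ⋯ < x_n = b and let y_0,…,y_n be real values. There exists a unique function S : [a,b] → ℝ such that: S restricted to each [x_i, x_{i+1}] is a polynomial of degree at most 3; S(x_i) = y_i for all i; S is twice continuously differentiable on [a,b]; and S''(x_0) = S''(x_n) = 0 (natural boundary conditions). -/

import Mathlib

open Set Polynomial

/-- `S` is a natural cubic spline on the partition `x 0 < x 1 < ⋯ < x n` interpolating the
values `y i`: on each subinterval `[x i, x (i+1)]` it coincides with a polynomial of degree
at most 3, it takes the value `y i` at each node `x i`, it is twice continuously
differentiable on `[x 0, x n]`, and its second derivative vanishes at both endpoints. -/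
def IsNaturalCubicSpline (n : ℕ) (x : Fin (n + 1) → ℝ) (y : Fin (n + 1) → ℝ)
    (S : ℝ → ℝ) : Prop :=
  (∀ i : Fin n, ∃ p : Polynomial ℝ, p.degree ≤ 3 ∧
      ∀ t ∈ Set.Icc (x i.castSucc) (x i.succ), S t = p.eval t) ∧
  (∀ i, S (x i) = y i) ∧
  ContDiffOn ℝ 2 S (Set.Icc (x 0) (x (Fin.last n))) ∧
  iteratedDerivWithin 2 S (Set.Icc (x 0) (x (Fin.last n))) (x 0) = 0 ∧
  iteratedDerivWithin 2 S (Set.Icc (x 0) (x (Fin.last n))) (x (Fin.last n)) = 0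

/-!
Uniqueness: the difference `S` of two interpolants is a natural spline vanishing at the nodes.
On a piece `p` of `S`, the polynomial `E = p' p'' - p''' p` (the energy `∫ (p'')²` integrated by
parts twice) satisfies `E' = (p'')² ≥ 0`, and at the nodes `E = S' S''`. The increments of `E`
over the pieces are therefore nonnegative and telescope to
`S'(xₙ) S''(xₙ) - S'(x₀) S''(x₀) = 0`, so `p'' = 0` on every piece, and a linear polynomial
vanishing at both ends of its piece is zero.

Existence: every `S t = a + b t + ∑ cᵢ (t - xᵢ)₊³` is a `C²` piecewise cubic with `S''(x₀) = 0`.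
The `n + 2` conditions `S(xⱼ) = yⱼ`, `S''(xₙ) = 0` form a square linear system in `(a, b, c)`,
whose kernel is trivial by uniqueness; hence it is solvable.
-/

theorem Fin.sum_succ_sub_castSucc {M : Type*} [AddCommGroup M] {n : ℕ} (f : Fin (n + 1) → M) :
    ∑ i : Fin n, (f i.succ - f i.castSucc) = f (Fin.last n) - f 0 := by
  induction n with
  | zero => simp
  | succ n ih =>
    rw [Fin.sum_univ_castSucc]
    simp only [Fin.succ_castSucc]
    rw [ih fun i => f i.castSucc]
    simp

theorem Fin.exists_mem_Icc_castSucc_succ {α : Type*} [LinearOrder α] {n : ℕ} (hn : 0 < n)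
    {x : Fin (n + 1) → α} {t : α} (ht : t ∈ Icc (x 0) (x (Fin.last n))) :
    ∃ i : Fin n, t ∈ Icc (x i.castSucc) (x i.succ) := by
  by_contra! h
  simp only [mem_Icc, not_and, not_le] at h
  have below : ∀ k, x k ≤ t := Fin.induction ht.1 fun i hi => (h i hi).le
  obtain ⟨m, rfl⟩ := Nat.exists_eq_succ_of_ne_zero hn.ne'
  exact (h (Fin.last m) (below _)).not_ge ht.2

theorem StrictMono.apply_zero_lt_apply_last {α : Type*} [Preorder α] {n : ℕ} (hn : 0 < n)
    {x : Fin (n + 1) → α} (hx : StrictMono x) : x 0 < x (Fin.last n) :=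
  hx (by simp [Fin.lt_def, hn])

theorem Monotone.Icc_castSucc_succ_subset {α : Type*} [Preorder α] {n : ℕ}
    {x : Fin (n + 1) → α} (hx : Monotone x) (i : Fin n) :
    Icc (x i.castSucc) (x i.succ) ⊆ Icc (x 0) (x (Fin.last n)) :=
  Icc_subset_Icc (hx (Fin.zero_le _)) (hx (Fin.le_last _))

theorem eq_zero_of_forall_sum_Iic_eq_zero {ι M : Type*} [LinearOrder ι]
    [LocallyFiniteOrderBot ι] [WellFoundedLT ι] [AddCommMonoid M] {c : ι → M}
    (hc : ∀ j, ∑ i ∈ Finset.Iic j, c i = 0) : c = 0 := by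
  funext j
  induction j using WellFoundedLT.induction with
  | ind j ih =>
    rw [Pi.zero_apply, ← hc j, ← Finset.Iio_insert, Finset.sum_insert Finset.notMem_Iio_self,
      Finset.sum_eq_zero fun i hi => ih i (Finset.mem_Iio.1 hi), add_zero]

theorem hasDerivAt_max_zero_pow (k : ℕ) (u : ℝ) :
    HasDerivAt (fun t => max t 0 ^ (k + 2)) ((k + 2) * max u 0 ^ (k + 1)) u := by
  have off_zero : ∀ y : ℝ, y ≠ 0 →
      HasDerivAt (fun t => max t 0 ^ (k + 2)) ((k + 2) * max y 0 ^ (k + 1)) y := by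
    intro y hy
    rcases hy.lt_or_gt with hy | hy
    · refine ((hasDerivAt_const y (0 : ℝ)).congr_of_eventuallyEq ?_).congr_deriv ?_
      · filter_upwards [eventually_lt_nhds hy] with t ht
        simp [max_eq_right ht.le]
      · simp [max_eq_right hy.le]
    · refine ((hasDerivAt_pow (k + 2) y).congr_of_eventuallyEq ?_).congr_deriv ?_
      · filter_upwards [eventually_gt_nhds hy] with t ht
        rw [max_eq_left ht.le]
      · push_cast
        rw [max_eq_left hy.le]
  rcases eq_or_ne u 0 with rfl | hu
  · exact hasDerivAt_of_hasDerivAt_of_ne off_zero (by fun_prop) (by fun_prop)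
  · exact off_zero u hu

theorem Polynomial.iteratedDeriv_eval (p : ℝ[X]) (m : ℕ) :
    iteratedDeriv m (fun t => p.eval t) = fun t => (derivative^[m] p).eval t := by
  induction m with
  | zero => simp
  | succ m ih =>
    ext t
    rw [iteratedDeriv_succ, ih, Function.iterate_succ_apply', Polynomial.deriv]

theorem iteratedDerivWithin_eq_eval_of_eqOn {S : ℝ → ℝ} {D I : Set ℝ} {p : ℝ[X]} {m : ℕ}
    (hD : UniqueDiffOn ℝ D) (hI : UniqueDiffOn ℝ I) (hID : I ⊆ D) (hS : ContDiffOn ℝ m S D)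
    (hSp : EqOn S (fun t => p.eval t) I) {t : ℝ} (ht : t ∈ I) :
    iteratedDerivWithin m S D t = (derivative^[m] p).eval t := by
  calc iteratedDerivWithin m S D t = iteratedDerivWithin m S I t := by
        simp only [iteratedDerivWithin_eq_iteratedFDerivWithin,
          iteratedFDerivWithin_subset hID hI hD hS ht]
    _ = iteratedDerivWithin m (fun t => p.eval t) I t := iteratedDerivWithin_congr hSp ht
    _ = iteratedDeriv m (fun t => p.eval t) t :=
        iteratedDerivWithin_eq_iteratedDeriv hI
          (by simpa using (p.contDiff_aeval (𝕜 := ℝ) m).contDiffAt) ht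
    _ = (derivative^[m] p).eval t := by rw [p.iteratedDeriv_eval]

section Energy

noncomputable def splineEnergy (p : ℝ[X]) : ℝ[X] :=
  derivative p * derivative^[2] p - derivative^[3] p * p

variable {p : ℝ[X]}

theorem derivative_splineEnergy (hp : p.natDegree ≤ 3) :
    derivative (splineEnergy p) = (derivative^[2] p) ^ 2 := by
  have h4 : derivative^[4] p = 0 := iterate_derivative_eq_zero (by omega)
  simp only [Function.iterate_succ_apply', Function.iterate_zero_apply] at h4 ⊢
  simp only [splineEnergy, Function.iterate_succ_apply', Function.iterate_zero_apply,
    derivative_sub, derivative_mul, h4]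
  ring

theorem monotone_eval_splineEnergy (hp : p.natDegree ≤ 3) :
    Monotone fun t => (splineEnergy p).eval t :=
  monotone_of_deriv_nonneg (Polynomial.differentiable _) fun t => by
    rw [Polynomial.deriv, derivative_splineEnergy hp, eval_pow]
    exact sq_nonneg _

theorem iterate_derivative_two_eq_zero_of_splineEnergy_eq (hp : p.natDegree ≤ 3)
    {a b : ℝ} (hab : a < b) (hE : (splineEnergy p).eval a = (splineEnergy p).eval b) :
    derivative^[2] p = 0 := by
  have hconst : splineEnergy p - C ((splineEnergy p).eval a) = 0 := by
    refine eq_zero_of_infinite_isRoot _ ((Icc_infinite hab).mono fun t ht => ?_)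
    have := monotone_eval_splineEnergy hp
    simp only [IsRoot, eval_sub, eval_C, sub_eq_zero]
    exact le_antisymm (hE ▸ this ht.2) (this ht.1)
  have := congrArg derivative hconst
  rw [derivative_sub, derivative_C, sub_zero, derivative_splineEnergy hp, derivative_zero] at this
  exact pow_eq_zero_iff two_ne_zero |>.1 this

theorem eq_zero_of_iterate_derivative_two_eq_zero (hp : derivative^[2] p = 0)
    {a b : ℝ} (hab : a ≠ b) (ha : p.eval a = 0) (hb : p.eval b = 0) : p = 0 := by
  have hdeg : p.natDegree < 2 := by
    have := derivative_eq_zero.1 hp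
    rw [natDegree_derivative] at this
    omega
  refine eq_zero_of_natDegree_lt_card_of_eval_eq_zero p (injective_pair_iff_ne.2 hab) ?_
    (by simpa using hdeg)
  simp [Fin.forall_fin_two, ha, hb]

theorem eval_splineEnergy_eq_of_eqOn {S : ℝ → ℝ} {D I : Set ℝ} (hD : UniqueDiffOn ℝ D)
    (hI : UniqueDiffOn ℝ I) (hID : I ⊆ D) (hS : ContDiffOn ℝ 2 S D)
    (hSp : EqOn S (fun t => p.eval t) I) {t : ℝ} (ht : t ∈ I) (hSt : S t = 0) :
    (splineEnergy p).eval t = iteratedDerivWithin 1 S D t * iteratedDerivWithin 2 S D t := by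
  have hpt : p.eval t = 0 := (hSp ht).symm.trans hSt
  rw [iteratedDerivWithin_eq_eval_of_eqOn hD hI hID (hS.of_le (by norm_num)) hSp ht,
    iteratedDerivWithin_eq_eval_of_eqOn hD hI hID hS hSp ht, splineEnergy, eval_sub, eval_mul,
    eval_mul, hpt, mul_zero, sub_zero, Function.iterate_one]

end Energy

namespace IsNaturalCubicSpline

variable {n : ℕ} {x y₁ y₂ : Fin (n + 1) → ℝ} {S S₁ S₂ : ℝ → ℝ}

theorem sub (hab : x 0 < x (Fin.last n)) (h₁ : IsNaturalCubicSpline n x y₁ S₁)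
    (h₂ : IsNaturalCubicSpline n x y₂ S₂) : IsNaturalCubicSpline n x (y₁ - y₂) (S₁ - S₂) := by
  obtain ⟨hpiece₁, hval₁, hC₁, hl₁, hr₁⟩ := h₁
  obtain ⟨hpiece₂, hval₂, hC₂, hl₂, hr₂⟩ := h₂
  have hsub : ∀ t ∈ Icc (x 0) (x (Fin.last n)), iteratedDerivWithin 2 (S₁ - S₂)
      (Icc (x 0) (x (Fin.last n))) t = iteratedDerivWithin 2 S₁ (Icc (x 0) (x (Fin.last n))) t
        - iteratedDerivWithin 2 S₂ (Icc (x 0) (x (Fin.last n))) t := fun t ht =>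
    iteratedDerivWithin_sub ht (uniqueDiffOn_Icc hab) (hC₁ t ht) (hC₂ t ht)
  refine ⟨fun i => ?_, fun i => by simp [hval₁, hval₂], hC₁.sub hC₂, ?_, ?_⟩
  · obtain ⟨p, hp, hSp⟩ := hpiece₁ i
    obtain ⟨q, hq, hSq⟩ := hpiece₂ i
    exact ⟨p - q, (degree_sub_le p q).trans (max_le hp hq),
      fun t ht => by simp [hSp t ht, hSq t ht]⟩
  · rw [hsub _ (left_mem_Icc.2 hab.le), hl₁, hl₂, sub_zero]
  · rw [hsub _ (right_mem_Icc.2 hab.le), hr₁, hr₂, sub_zero]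

theorem eqOn_zero (hn : 0 < n) (hx : StrictMono x) (hS : IsNaturalCubicSpline n x 0 S) :
    EqOn S 0 (Icc (x 0) (x (Fin.last n))) := by
  obtain ⟨hpiece, hval, hC, hl, hr⟩ := hS
  choose p hdeg hp using hpiece
  replace hdeg : ∀ i, (p i).natDegree ≤ 3 := fun i => natDegree_le_of_degree_le (hdeg i)
  set D := Icc (x 0) (x (Fin.last n))
  have hlt : ∀ i : Fin n, x i.castSucc < x i.succ := fun i => hx i.castSucc_lt_succ
  have hleft : ∀ i : Fin n, x i.castSucc ∈ Icc (x i.castSucc) (x i.succ) :=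
    fun i => left_mem_Icc.2 (hlt i).le
  have hright : ∀ i : Fin n, x i.succ ∈ Icc (x i.castSucc) (x i.succ) :=
    fun i => right_mem_Icc.2 (hlt i).le
  set g := fun t => iteratedDerivWithin 1 S D t * iteratedDerivWithin 2 S D t
  have hnode : ∀ i j, x j ∈ Icc (x i.castSucc) (x i.succ) →
      (splineEnergy (p i)).eval (x j) = g (x j) := fun i j hj =>
    eval_splineEnergy_eq_of_eqOn (uniqueDiffOn_Icc (hx.apply_zero_lt_apply_last hn))
      (uniqueDiffOn_Icc (hlt i)) (hx.monotone.Icc_castSucc_succ_subset i) hC (hp i) hj (hval j)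
  have htotal : ∑ i, ((splineEnergy (p i)).eval (x i.succ)
      - (splineEnergy (p i)).eval (x i.castSucc)) = 0 := by
    simp only [hnode _ _ (hleft _), hnode _ _ (hright _)]
    exact (Fin.sum_succ_sub_castSucc (g ∘ x)).trans (by simp [g, hl, hr])
  have hflat : ∀ i, (splineEnergy (p i)).eval (x i.castSucc)
      = (splineEnergy (p i)).eval (x i.succ) := fun i => by
    have := (Finset.sum_eq_zero_iff_of_nonneg fun i _ => sub_nonneg.2
      (monotone_eval_splineEnergy (hdeg i) (hlt i).le)).1 htotal i (Finset.mem_univ i)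
    linarith
  have hzero : ∀ i, p i = 0 := fun i =>
    eq_zero_of_iterate_derivative_two_eq_zero
      (iterate_derivative_two_eq_zero_of_splineEnergy_eq (hdeg i) (hlt i) (hflat i)) (hlt i).ne
      (by rw [← hp i _ (hleft i), hval, Pi.zero_apply])
      (by rw [← hp i _ (hright i), hval, Pi.zero_apply])
  intro t ht
  obtain ⟨i, hi⟩ := Fin.exists_mem_Icc_castSucc_succ hn ht
  simp [hp i t hi, hzero i]

end IsNaturalCubicSpline

section TruncatedPowerSpline

variable {n : ℕ} (x : Fin (n + 1) → ℝ)

noncomputable def truncatedPowerSpline (v : ℝ × ℝ × (Fin n → ℝ)) (t : ℝ) : ℝ :=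
  v.1 + v.2.1 * t + ∑ i, v.2.2 i * max (t - x i.castSucc) 0 ^ 3

noncomputable def truncatedPowerPiece (v : ℝ × ℝ × (Fin n → ℝ)) (j : Fin n) : ℝ[X] :=
  C v.1 + C v.2.1 * X + ∑ i ∈ Finset.Iic j, C (v.2.2 i) * (X - C (x i.castSucc)) ^ 3

/-- The second component is `S''(x n) / 6` for `S = truncatedPowerSpline x v`; `S''(x 0)`
vanishes for every `v`. -/
noncomputable def splineDataMap : (ℝ × ℝ × (Fin n → ℝ)) →ₗ[ℝ] (Fin (n + 1) → ℝ) × ℝ where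
  toFun v := (fun j => truncatedPowerSpline x v (x j),
    ∑ i, v.2.2 i * (x (Fin.last n) - x i.castSucc))
  map_add' v w := by
    ext <;> simp [truncatedPowerSpline, add_mul, Finset.sum_add_distrib]
    ring
  map_smul' a v := by
    ext <;> simp [truncatedPowerSpline, Finset.mul_sum, mul_add, mul_sub, mul_assoc]

theorem hasDerivAt_truncatedPowerSpline (v : ℝ × ℝ × (Fin n → ℝ)) (t : ℝ) :
    HasDerivAt (truncatedPowerSpline x v)
      (v.2.1 + ∑ i, 3 * v.2.2 i * max (t - x i.castSucc) 0 ^ 2) t := by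
  have hcube : ∀ i : Fin n, HasDerivAt (fun t => v.2.2 i * max (t - x i.castSucc) 0 ^ 3)
      (3 * v.2.2 i * max (t - x i.castSucc) 0 ^ 2) t := fun i =>
    (((hasDerivAt_max_zero_pow 1 _).comp_sub_const t _).const_mul (v.2.2 i)).congr_deriv
      (by norm_num; ring)
  have hlin : HasDerivAt (fun t => v.1 + v.2.1 * t) v.2.1 t := by
    simpa using ((hasDerivAt_id t).const_mul v.2.1).const_add v.1
  exact hlin.add (HasDerivAt.fun_sum fun i _ => hcube i)

theorem hasDerivAt_deriv_truncatedPowerSpline (v : ℝ × ℝ × (Fin n → ℝ)) (t : ℝ) :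
    HasDerivAt (deriv (truncatedPowerSpline x v))
      (6 * ∑ i, v.2.2 i * max (t - x i.castSucc) 0) t := by
  have hsq : ∀ i : Fin n, HasDerivAt (fun t => 3 * v.2.2 i * max (t - x i.castSucc) 0 ^ 2)
      (6 * (v.2.2 i * max (t - x i.castSucc) 0)) t := fun i =>
    (((hasDerivAt_max_zero_pow 0 _).comp_sub_const t _).const_mul (3 * v.2.2 i)).congr_deriv
      (by norm_num; ring)
  rw [funext fun t => (hasDerivAt_truncatedPowerSpline x v t).deriv, Finset.mul_sum]
  exact (HasDerivAt.fun_sum fun i _ => hsq i).const_add v.2.1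

theorem contDiff_truncatedPowerSpline (v : ℝ × ℝ × (Fin n → ℝ)) :
    ContDiff ℝ 2 (truncatedPowerSpline x v) := by
  refine (contDiff_succ_iff_deriv (n := 1)).2
    ⟨fun t => (hasDerivAt_truncatedPowerSpline x v t).differentiableAt, by simp,
      (contDiff_succ_iff_deriv (n := 0)).2
        ⟨fun t => (hasDerivAt_deriv_truncatedPowerSpline x v t).differentiableAt, by simp, ?_⟩⟩
  rw [contDiff_zero, funext fun t => (hasDerivAt_deriv_truncatedPowerSpline x v t).deriv]
  fun_prop

theorem iteratedDeriv_two_truncatedPowerSpline (v : ℝ × ℝ × (Fin n → ℝ)) (t : ℝ) :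
    iteratedDeriv 2 (truncatedPowerSpline x v) t =
      6 * ∑ i, v.2.2 i * max (t - x i.castSucc) 0 := by
  rw [iteratedDeriv_succ, iteratedDeriv_one, (hasDerivAt_deriv_truncatedPowerSpline x v t).deriv]

theorem degree_truncatedPowerPiece_le (v : ℝ × ℝ × (Fin n → ℝ)) (j : Fin n) :
    (truncatedPowerPiece x v j).degree ≤ 3 := by
  rw [← mem_degreeLE]
  refine add_mem (add_mem ?_ ?_) (Submodule.sum_mem _ fun i _ => ?_) <;> rw [mem_degreeLE] <;>
    compute_degree!

theorem coeff_truncatedPowerPiece_three (v : ℝ × ℝ × (Fin n → ℝ)) (j : Fin n) :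
    (truncatedPowerPiece x v j).coeff 3 = ∑ i ∈ Finset.Iic j, v.2.2 i := by
  have hcube : ∀ r : ℝ, ((X - C r) ^ 3).coeff 3 = 1 := fun r => by
    simpa using ((monic_X_sub_C r).pow 3).coeff_natDegree
  simp [truncatedPowerPiece, hcube]

variable {x}

theorem eqOn_truncatedPowerPiece (hx : Monotone x) (v : ℝ × ℝ × (Fin n → ℝ)) (j : Fin n) :
    EqOn (truncatedPowerSpline x v) (fun t => (truncatedPowerPiece x v j).eval t)
      (Icc (x j.castSucc) (x j.succ)) := by
  intro t ht
  have hright : ∀ i ∈ Finset.univ, i ∉ Finset.Iic j →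
      v.2.2 i * max (t - x i.castSucc) 0 ^ 3 = 0 := fun i _ hi => by
    have : x j.succ ≤ x i.castSucc := hx (Fin.succ_le_castSucc_iff.2 (by simpa using hi))
    simp [max_eq_right (sub_nonpos.2 (ht.2.trans this))]
  simp only [truncatedPowerSpline, truncatedPowerPiece, eval_add, eval_mul, eval_C, eval_X,
    eval_finsetSum, eval_pow, eval_sub, ← Finset.sum_subset (Finset.subset_univ _) hright]
  refine congrArg _ (Finset.sum_congr rfl fun i hi => ?_)
  have : x i.castSucc ≤ t :=
    (hx (Fin.castSucc_le_castSucc_iff.2 (Finset.mem_Iic.1 hi))).trans ht.1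
  rw [max_eq_left (sub_nonneg.2 this)]

theorem isNaturalCubicSpline_truncatedPowerSpline (hn : 0 < n) (hx : StrictMono x)
    (v : ℝ × ℝ × (Fin n → ℝ)) (hv : (splineDataMap x v).2 = 0) :
    IsNaturalCubicSpline n x (splineDataMap x v).1 (truncatedPowerSpline x v) := by
  have hab := hx.apply_zero_lt_apply_last hn
  have hS'' : ∀ t ∈ Icc (x 0) (x (Fin.last n)),
      iteratedDerivWithin 2 (truncatedPowerSpline x v) (Icc (x 0) (x (Fin.last n))) t =
        6 * ∑ i, v.2.2 i * max (t - x i.castSucc) 0 := fun t ht =>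
    (iteratedDerivWithin_eq_iteratedDeriv (uniqueDiffOn_Icc hab)
      (contDiff_truncatedPowerSpline x v).contDiffAt ht).trans
      (iteratedDeriv_two_truncatedPowerSpline x v t)
  refine ⟨fun j => ⟨_, degree_truncatedPowerPiece_le x v j,
    eqOn_truncatedPowerPiece hx.monotone v j⟩, fun j => rfl,
    (contDiff_truncatedPowerSpline x v).contDiffOn, ?_, ?_⟩
  · rw [hS'' _ (left_mem_Icc.2 hab.le), Finset.sum_eq_zero fun i _ => ?_, mul_zero]
    rw [max_eq_right (sub_nonpos.2 (hx.monotone (Fin.zero_le _))), mul_zero]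
  · have hsum :
        ∑ i, v.2.2 i * max (x (Fin.last n) - x i.castSucc) 0 = (splineDataMap x v).2 :=
      Finset.sum_congr rfl fun i _ => by
        rw [max_eq_left (sub_nonneg.2 (hx.monotone (Fin.le_last _)))]
    rw [hS'' _ (right_mem_Icc.2 hab.le), hsum, hv, mul_zero]

theorem splineDataMap_injective (hn : 0 < n) (hx : StrictMono x) :
    Function.Injective (splineDataMap x) := by
  refine (injective_iff_map_eq_zero _).2 fun v hv => ?_
  have hS := isNaturalCubicSpline_truncatedPowerSpline hn hx v (by simp [hv])
  rw [hv] at hS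
  have hzero := hS.eqOn_zero hn hx
  have hpiece : ∀ j, truncatedPowerPiece x v j = 0 := fun j => by
    refine eq_zero_of_infinite_isRoot _ ((Icc_infinite (hx j.castSucc_lt_succ)).mono
      fun t ht => ?_)
    exact (eqOn_truncatedPowerPiece hx.monotone v j ht).symm.trans
      (hzero (hx.monotone.Icc_castSucc_succ_subset j ht))
  have hc : v.2.2 = 0 := eq_zero_of_forall_sum_Iic_eq_zero fun j => by
    rw [← coeff_truncatedPowerPiece_three, hpiece j, coeff_zero]
  obtain ⟨a, b, c⟩ := v
  obtain rfl : c = 0 := hc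
  have hab := hx.apply_zero_lt_apply_last hn
  have h₀ := hzero (left_mem_Icc.2 hab.le)
  have h₁ := hzero (right_mem_Icc.2 hab.le)
  simp only [truncatedPowerSpline, Pi.zero_apply, zero_mul, Finset.sum_const_zero, add_zero]
    at h₀ h₁
  obtain rfl : b = 0 := by
    have : b * (x (Fin.last n) - x 0) = 0 := by linarith
    exact (mul_eq_zero.1 this).resolve_right (sub_ne_zero.2 hab.ne')
  obtain rfl : a = 0 := by simpa using h₀
  rfl

theorem splineDataMap_surjective (hn : 0 < n) (hx : StrictMono x) :
    Function.Surjective (splineDataMap x) :=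
  (LinearMap.injective_iff_surjective_of_finrank_eq_finrank (by simp; ring)).1
    (splineDataMap_injective hn hx)

end TruncatedPowerSpline

/-- Existence and uniqueness of the natural cubic spline interpolant: given nodes
`a = x 0 < x 1 < ⋯ < x n = b` and values `y 0, …, y n`, there is a function
`S : [a,b] → ℝ` which is a natural cubic spline interpolating the data, and it is unique
as a function on `[a,b]`. -/
theorem natural_cubic_spline_existsUnique (n : ℕ) (hn : 0 < n)
    (x : Fin (n + 1) → ℝ) (hx : StrictMono x) (y : Fin (n + 1) → ℝ) :
    (∃ S : ℝ → ℝ, IsNaturalCubicSpline n x y S) ∧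
    (∀ S₁ S₂ : ℝ → ℝ, IsNaturalCubicSpline n x y S₁ → IsNaturalCubicSpline n x y S₂ →
      Set.EqOn S₁ S₂ (Set.Icc (x 0) (x (Fin.last n)))) := by
  refine ⟨?_, fun S₁ S₂ h₁ h₂ t ht => ?_⟩
  · obtain ⟨v, hv⟩ := splineDataMap_surjective hn hx (y, 0)
    exact ⟨_, hv ▸ isNaturalCubicSpline_truncatedPowerSpline hn hx v (by rw [hv])⟩
  · have h := h₁.sub (hx.apply_zero_lt_apply_last hn) h₂
    rw [sub_self] at h
    exact sub_eq_zero.1 (h.eqOn_zero hn hx ht)
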